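/- Let u be a quadratic irrational with minimal integer quadratic equation c1 + c2*u + c3*u^2 = 0 (gcd(c1,c2,c3)=1). Suppose integers (k1,k2,k3), not all zero, give a resonance k1*λ1 + k2*λ2 + k3*λ3 = 0 of the Bianchi IX eigenvalues at u. Then (k1,k2,k3) is an integer multiple of (c1 - c2 + c3, c1, c3). In particular, the minimal value of |k1|+|k2|+|k3| over all nonzero resonances equals |c1 - c2 + c3| + |c1| + |c3|, provided gcd(c1 - c2 + c3, c1, c3) = 1. -/

import Mathlib

/-! A resonance `k₁λ₁ + k₂λ₂ + k₃λ₃ = 0` is, after clearing the positive denominator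
`1 + u + u²`, the integer quadratic relation `k₂ + (k₂ - k₁ + k₃) u + k₃ u² = 0` satisfied by `u`.
Since `u` is irrational, every integer quadratic relation of `u` is an integer multiple of the
primitive one `(c₁, c₂, c₃)`, which gives `k = z (c₁ - c₂ + c₃, c₁, c₃)`; the minimal order is then
attained at `z = ±1`. -/

theorem Irrational.eq_zero_of_intCast_add_intCast_mul_eq_zero {u : ℝ} (hu : Irrational u)
    {p q : ℤ} (h : (p : ℝ) + q * u = 0) : p = 0 ∧ q = 0 := by
  obtain rfl | hq := eq_or_ne q 0
  · exact ⟨by simpa using h, rfl⟩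
  · exact absurd h ((hu.intCast_mul hq).intCast_add p).ne_zero

theorem Int.exists_mul_add_mul_add_mul_eq_one {a b c : ℤ} (h : Int.gcd a (Int.gcd b c) = 1) :
    ∃ x y w : ℤ, a * x + b * y + c * w = 1 := by
  refine ⟨Int.gcdA a (Int.gcd b c), Int.gcdA b c * Int.gcdB a (Int.gcd b c),
    Int.gcdB b c * Int.gcdB a (Int.gcd b c), ?_⟩
  have hout := Int.gcd_eq_gcd_ab a (Int.gcd b c)
  rw [h, Nat.cast_one] at hout
  linear_combination -hout - Int.gcdB a (Int.gcd b c) * Int.gcd_eq_gcd_ab b c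

theorem Int.exists_eq_mul_of_cross_eq {c1 c2 c3 a b c : ℤ}
    (hgcd : Int.gcd c1 (Int.gcd c2 c3) = 1) (hc3 : c3 ≠ 0)
    (ha : c3 * a = c * c1) (hb : c3 * b = c * c2) :
    ∃ z : ℤ, a = z * c1 ∧ b = z * c2 ∧ c = z * c3 := by
  obtain ⟨x, y, w, hxyw⟩ := Int.exists_mul_add_mul_add_mul_eq_one hgcd
  -- `c = c (c₁x + c₂y + c₃w)` and `c cᵢ = c₃ (a, b, c)ᵢ`, so `c₃ ∣ c`
  have hcz : c = (a * x + b * y + c * w) * c3 := by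
    linear_combination -c * hxyw - x * ha - y * hb
  refine ⟨a * x + b * y + c * w, mul_left_cancel₀ hc3 ?_, mul_left_cancel₀ hc3 ?_, hcz⟩
  · linear_combination ha + c1 * hcz
  · linear_combination hb + c2 * hcz

theorem Irrational.exists_eq_mul_of_quadratic_relation {u : ℝ} (hirr : Irrational u)
    {c1 c2 c3 : ℤ} (hgcd : Int.gcd c1 (Int.gcd c2 c3) = 1)
    (hc : (c1 : ℝ) + c2 * u + c3 * u ^ 2 = 0)
    {a b c : ℤ} (h : (a : ℝ) + b * u + c * u ^ 2 = 0) :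
    ∃ z : ℤ, a = z * c1 ∧ b = z * c2 ∧ c = z * c3 := by
  have hc3 : c3 ≠ 0 := by
    rintro rfl
    obtain ⟨rfl, rfl⟩ := hirr.eq_zero_of_intCast_add_intCast_mul_eq_zero (by simpa using hc)
    simp at hgcd
  -- eliminating `u²` leaves a linear relation, which must be trivial
  have hlin : ((c3 * a - c * c1 : ℤ) : ℝ) + ((c3 * b - c * c2 : ℤ) : ℝ) * u = 0 := by
    push_cast
    linear_combination (c3 : ℝ) * h - (c : ℝ) * hc
  obtain ⟨ha, hb⟩ := hirr.eq_zero_of_intCast_add_intCast_mul_eq_zero hlin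
  exact Int.exists_eq_mul_of_cross_eq hgcd hc3 (sub_eq_zero.1 ha) (sub_eq_zero.1 hb)

theorem bianchi_resonance_iff (u : ℝ) (k1 k2 k3 : ℤ) :
    (k1 : ℝ) * (-6 * u / (1 + u + u ^ 2))
        + (k2 : ℝ) * (6 * (1 + u) / (1 + u + u ^ 2))
        + (k3 : ℝ) * (6 * u * (1 + u) / (1 + u + u ^ 2)) = 0 ↔
      (k2 : ℝ) + ((k2 - k1 + k3 : ℤ) : ℝ) * u + (k3 : ℝ) * u ^ 2 = 0 := by
  have hD : (1 : ℝ) + u + u ^ 2 ≠ 0 := by nlinarith [sq_nonneg (u + 1 / 2)]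
  have hlhs : (k1 : ℝ) * (-6 * u / (1 + u + u ^ 2))
        + (k2 : ℝ) * (6 * (1 + u) / (1 + u + u ^ 2))
        + (k3 : ℝ) * (6 * u * (1 + u) / (1 + u + u ^ 2)) =
      6 * ((k2 : ℝ) + ((k2 - k1 + k3 : ℤ) : ℝ) * u + (k3 : ℝ) * u ^ 2) / (1 + u + u ^ 2) := by
    push_cast
    ring
  rw [hlhs, div_eq_zero_iff, mul_eq_zero, or_iff_left hD, or_iff_right (by norm_num)]

theorem Int.abs_add_abs_add_abs_le_abs_mul {z : ℤ} (hz : z ≠ 0) (a b c : ℤ) :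
    |a| + |b| + |c| ≤ |z * a| + |z * b| + |z * c| := by
  have hz1 : 1 ≤ |z| := Int.one_le_abs hz
  simp only [abs_mul]
  nlinarith [abs_nonneg a, abs_nonneg b, abs_nonneg c]

theorem resonances_are_multiples_and_minimal_order_general
    (u : ℝ) (hirr : Irrational u)
    (c1 c2 c3 : ℤ) (hgcd : Int.gcd c1 (Int.gcd c2 c3) = 1)
    (hc : (c1 : ℝ) + c2 * u + c3 * u ^ 2 = 0) :
    (∀ k1 k2 k3 : ℤ, ¬(k1 = 0 ∧ k2 = 0 ∧ k3 = 0) →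
      ((k1 : ℝ) * (-6 * u / (1 + u + u ^ 2))
        + (k2 : ℝ) * (6 * (1 + u) / (1 + u + u ^ 2))
        + (k3 : ℝ) * (6 * u * (1 + u) / (1 + u + u ^ 2)) = 0) →
      ∃ z : ℤ, k1 = z * (c1 - c2 + c3) ∧ k2 = z * c1 ∧ k3 = z * c3) ∧
    (Int.gcd (c1 - c2 + c3) (Int.gcd c1 c3) = 1 →
      IsLeast
        { n : ℤ | ∃ k1 k2 k3 : ℤ, ¬(k1 = 0 ∧ k2 = 0 ∧ k3 = 0) ∧
            ((k1 : ℝ) * (-6 * u / (1 + u + u ^ 2))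
              + (k2 : ℝ) * (6 * (1 + u) / (1 + u + u ^ 2))
              + (k3 : ℝ) * (6 * u * (1 + u) / (1 + u + u ^ 2)) = 0) ∧
            n = |k1| + |k2| + |k3| }
        (|c1 - c2 + c3| + |c1| + |c3|)) := by
  have multiple : ∀ k1 k2 k3 : ℤ,
      ((k1 : ℝ) * (-6 * u / (1 + u + u ^ 2))
        + (k2 : ℝ) * (6 * (1 + u) / (1 + u + u ^ 2))
        + (k3 : ℝ) * (6 * u * (1 + u) / (1 + u + u ^ 2)) = 0) →
      ∃ z : ℤ, k1 = z * (c1 - c2 + c3) ∧ k2 = z * c1 ∧ k3 = z * c3 := by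
    intro k1 k2 k3 hres
    obtain ⟨z, h2, hmid, h3⟩ := hirr.exists_eq_mul_of_quadratic_relation hgcd hc
      ((bianchi_resonance_iff u k1 k2 k3).1 hres)
    exact ⟨z, by linear_combination h2 - hmid + h3, h2, h3⟩
  refine ⟨fun k1 k2 k3 _ => multiple k1 k2 k3, fun hg => ⟨?_, ?_⟩⟩
  · refine ⟨c1 - c2 + c3, c1, c3, ?_, (bianchi_resonance_iff u _ _ _).2 ?_, rfl⟩
    · rintro ⟨h1, h2, h3⟩
      rw [h1, h2, h3] at hg
      simp at hg
    · push_cast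
      linear_combination hc
  · rintro n ⟨k1, k2, k3, hne, hres, rfl⟩
    obtain ⟨z, rfl, rfl, rfl⟩ := multiple k1 k2 k3 hres
    have hz : z ≠ 0 := by
      rintro rfl
      simp at hne
    exact Int.abs_add_abs_add_abs_le_abs_mul hz _ _ _

theorem resonances_are_multiples_and_minimal_order
    (u : ℝ) (hu : 0 < u) (hirr : Irrational u)
    (c1 c2 c3 : ℤ) (hgcd : Int.gcd c1 (Int.gcd c2 c3) = 1)
    (hc : (c1 : ℝ) + c2 * u + c3 * u ^ 2 = 0) :
    (∀ k1 k2 k3 : ℤ, ¬(k1 = 0 ∧ k2 = 0 ∧ k3 = 0) →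
      ((k1 : ℝ) * (-6 * u / (1 + u + u ^ 2))
        + (k2 : ℝ) * (6 * (1 + u) / (1 + u + u ^ 2))
        + (k3 : ℝ) * (6 * u * (1 + u) / (1 + u + u ^ 2)) = 0) →
      ∃ z : ℤ, k1 = z * (c1 - c2 + c3) ∧ k2 = z * c1 ∧ k3 = z * c3) ∧
    (Int.gcd (c1 - c2 + c3) (Int.gcd c1 c3) = 1 →
      IsLeast
        { n : ℤ | ∃ k1 k2 k3 : ℤ, ¬(k1 = 0 ∧ k2 = 0 ∧ k3 = 0) ∧
            ((k1 : ℝ) * (-6 * u / (1 + u + u ^ 2))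
              + (k2 : ℝ) * (6 * (1 + u) / (1 + u + u ^ 2))
              + (k3 : ℝ) * (6 * u * (1 + u) / (1 + u + u ^ 2)) = 0) ∧
            n = |k1| + |k2| + |k3| }
        (|c1 - c2 + c3| + |c1| + |c3|)) :=
  resonances_are_multiples_and_minimal_order_general u hirr c1 c2 c3 hgcd hc
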